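/- arXiv:1801.10418 — 2 statements merged into one kernel-verified Lean document; each statement's English description precedes it below -/
import Mathlib

section
/- If T is a rooted binary tree with n leaves of maximal (resp. minimal) Sackin index among all rooted binary trees with n leaves, and T = (T_a, T_b) is its decomposition into the two maximal pending subtrees with n_a and n_b leaves, then T_a has maximal (resp. minimal) Sackin index among trees with n_a leaves and T_b has maximal (resp. minimal) Sackin index among trees with n_b leaves. -/
/-- Rooted binary trees: a single node (leaf) or a root with two subtrees. -/
inductive BTree : Type
  | leaf : BTree
  | node : BTree → BTree → BTree

namespace BTree

/-- Number of leaves of a rooted binary tree. -/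
def leaves : BTree → ℕ
  | leaf => 1
  | node l r => l.leaves + r.leaves

/-- Sum of depths of all leaves, where the root of the tree is at depth `d`. -/
def sackinAux : BTree → ℕ → ℕ
  | leaf, d => d
  | node l r, d => sackinAux l (d + 1) + sackinAux r (d + 1)

/-- Sackin index: the sum of the depths of all leaves. -/
def sackin (t : BTree) : ℕ := sackinAux t 0

/-- Sum, over all internal nodes `u`, of the number of leaves below `u`. -/
def internalLeafSum : BTree → ℕ
  | leaf => 0
  | node l r => (l.leaves + r.leaves) + internalLeafSum l + internalLeafSum r

/-- Sum, over all nodes `v`, of the number of leaves below `v`. -/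
def allNodesLeafSum : BTree → ℕ
  | leaf => 1
  | node l r => (l.leaves + r.leaves) + allNodesLeafSum l + allNodesLeafSum r

/-- Sum, over all non-root nodes `v`, of the number of leaves below `v`. -/
def nonRootLeafSum : BTree → ℕ
  | leaf => 0
  | node l r => allNodesLeafSum l + allNodesLeafSum r

/-- Height: maximal number of edges on a root-to-leaf path. -/
def height : BTree → ℕ
  | leaf => 0
  | node l r => max l.height r.height + 1

/-- Subtree at a given path from the root (`false` = left child, `true` = right child). -/
def subtreeAt : BTree → List Bool → Option BTree
  | t, [] => some t
  | leaf, _ :: _ => none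
  | node l _, false :: p => subtreeAt l p
  | node _ r, true :: p => subtreeAt r p

/-- Number of cherries (pairs of sibling leaves) whose two leaves are at depth `d`. -/
def cherriesAt : BTree → ℕ → ℕ
  | leaf, _ => 0
  | node leaf leaf, d => if d = 1 then 1 else 0
  | node _ _, 0 => 0
  | node l r, d + 1 => cherriesAt l d + cherriesAt r d

/-- `DeleteCherry t d t'` : `t'` is obtained from `t` by deleting a cherry `[u,v]`
(both leaves at depth `d`) together with the two pendant edges, turning the
parent `w` into a leaf. -/
inductive DeleteCherry : BTree → ℕ → BTree → Prop
  | base : DeleteCherry (BTree.node BTree.leaf BTree.leaf) 1 BTree.leaf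
  | left {l l' r : BTree} {d : ℕ} :
      DeleteCherry l d l' → DeleteCherry (BTree.node l r) (d + 1) (BTree.node l' r)
  | right {l r r' : BTree} {d : ℕ} :
      DeleteCherry r d r' → DeleteCherry (BTree.node l r) (d + 1) (BTree.node l r')

/-- Caterpillar tree with `n` leaves (for `n ≥ 1`): the unique rooted binary tree
with exactly one cherry. -/
def caterpillar : ℕ → BTree
  | 0 => BTree.leaf
  | 1 => BTree.leaf
  | n + 2 => BTree.node (caterpillar (n + 1)) BTree.leaf

/-- Fully balanced tree of height `k`, with `2^k` leaves all at depth `k`. -/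
def balanced : ℕ → BTree
  | 0 => BTree.leaf
  | k + 1 => BTree.node (balanced k) (balanced k)

/-- Isomorphism of rooted binary trees (children are unordered). -/
inductive Iso : BTree → BTree → Prop
  | leaf : Iso BTree.leaf BTree.leaf
  | node {a b c d : BTree} : Iso a c → Iso b d → Iso (BTree.node a b) (BTree.node c d)
  | swap {a b c d : BTree} : Iso a d → Iso b c → Iso (BTree.node a b) (BTree.node c d)

end BTree

open BTree

lemma sackinAux_eq (t : BTree) : ∀ d, t.sackinAux d = t.sackinAux 0 + d * t.leaves := by
  induction t with
  | leaf => intro d; simp [sackinAux, leaves]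
  | node l r ihl ihr =>
    intro d
    simp only [sackinAux, leaves]
    rw [ihl (d+1), ihr (d+1), ihl 1, ihr 1]
    ring

lemma sackin_node (l r : BTree) :
    (BTree.node l r).sackin = l.sackin + r.sackin + l.leaves + r.leaves := by
  simp only [sackin, sackinAux]
  rw [sackinAux_eq l 1, sackinAux_eq r 1]
  ring

/-- if `T = (T_a, T_b)` has maximal (resp. minimal) Sackin index
among trees with the same number of leaves, then so do `T_a` and `T_b`. -/
theorem stmt7 (ta tb : BTree) :
    ((∀ t' : BTree, t'.leaves = (BTree.node ta tb).leaves →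
        t'.sackin ≤ (BTree.node ta tb).sackin) →
      (∀ t' : BTree, t'.leaves = ta.leaves → t'.sackin ≤ ta.sackin) ∧
      (∀ t' : BTree, t'.leaves = tb.leaves → t'.sackin ≤ tb.sackin)) ∧
    ((∀ t' : BTree, t'.leaves = (BTree.node ta tb).leaves →
        (BTree.node ta tb).sackin ≤ t'.sackin) →
      (∀ t' : BTree, t'.leaves = ta.leaves → ta.sackin ≤ t'.sackin) ∧
      (∀ t' : BTree, t'.leaves = tb.leaves → tb.sackin ≤ t'.sackin)) := by
  constructor
  · intro h
    constructor
    · intro t' ht'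
      have := h (BTree.node t' tb) (by simp [leaves, ht'])
      rw [sackin_node, sackin_node, ht'] at this
      omega
    · intro t' ht'
      have := h (BTree.node ta t') (by simp [leaves, ht'])
      rw [sackin_node, sackin_node, ht'] at this
      omega
  · intro h
    constructor
    · intro t' ht'
      have := h (BTree.node t' tb) (by simp [leaves, ht'])
      rw [sackin_node, sackin_node, ht'] at this
      omega
    · intro t' ht'
      have := h (BTree.node ta t') (by simp [leaves, ht'])
      rw [sackin_node, sackin_node, ht'] at this
      omega
end

section
/- Let T be a rooted binary tree with n leaves, height k = ⌈log₂ n⌉, and exactly n − 2^{k−1} cherries at maximal depth k. Then T has minimal Sackin index among all rooted binary trees with n leaves. -/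
open BTree

/-!
A tree with `n` leaves and Sackin index `S` satisfies `n * (j + 1) ≤ S + 2 ^ j` for every `j`:
both subtrees of the root satisfy it with `j - 1`, and the root adds one to the depth of each
leaf. A tree all of whose leaves lie at depth `k - 1` or `k` attains this bound with equality
for that `k`, so it is Sackin-minimal. It remains to see that the cherry condition forces every
leaf to depth at least `k - 1`. When the height is at most `k`, the leaves at depth `k` are
exactly the `2 * c` leaves of the `c` cherries there, and Kraft's equality
`∑ 2 ^ (k - depth) = 2 ^ k` gives `2 * n ≤ 2 ^ k + 2 * c`, with slack at least `2` as soon as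
some leaf has depth `≤ k - 2`. For `c = n - 2 ^ (k - 1)` there is no slack.
-/

namespace BTree

def minDepth : BTree → ℕ
  | leaf => 0
  | node l r => min l.minDepth r.minDepth + 1

theorem sackinAux_eq (t : BTree) (d : ℕ) : t.sackinAux d = t.sackin + d * t.leaves := by
  induction t generalizing d with
  | leaf => simp [sackinAux, sackin, leaves]
  | node l r ihl ihr =>
    rw [sackin, sackinAux, sackinAux, leaves, ihl, ihr, ihl, ihr]
    ring

theorem sackin_node (l r : BTree) :
    (node l r).sackin = l.sackin + r.sackin + l.leaves + r.leaves := by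
  rw [sackin, sackinAux, sackinAux_eq, sackinAux_eq]
  ring

theorem leaves_mul_le_sackin_add_two_pow (t : BTree) (j : ℕ) :
    t.leaves * (j + 1) ≤ t.sackin + 2 ^ j := by
  induction t generalizing j with
  | leaf => simpa [leaves, sackin, sackinAux] using Nat.lt_two_pow_self (n := j)
  | node l r ihl ihr =>
    rw [sackin_node, leaves]
    cases j with
    | zero => omega
    | succ i =>
      have hl := ihl i
      have hr := ihr i
      rw [pow_succ]
      nlinarith

theorem sackin_add_two_pow_eq (t : BTree) {k : ℕ} (hh : t.height ≤ k)
    (hm : k ≤ t.minDepth + 1) : t.sackin + 2 ^ k = t.leaves * (k + 1) := by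
  induction t generalizing k with
  | leaf =>
    simp only [minDepth] at hm
    interval_cases k <;> rfl
  | node l r ihl ihr =>
    simp only [height, minDepth] at hh hm
    obtain ⟨j, rfl⟩ : ∃ j, k = j + 1 := ⟨k - 1, by omega⟩
    have hl := ihl (k := j) (by omega) (by omega)
    have hr := ihr (k := j) (by omega) (by omega)
    rw [sackin_node, leaves, pow_succ]
    nlinarith

/-- Away from depth `1`, the cherry count of a node splits over its two subtrees; at depth `1`
the node `node leaf leaf` is itself a cherry. -/
theorem cherriesAt_node_add_two (l r : BTree) (d : ℕ) :
    (node l r).cherriesAt (d + 2) = l.cherriesAt (d + 1) + r.cherriesAt (d + 1) := by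
  cases l <;> cases r <;> simp [cherriesAt]

theorem two_mul_leaves_le (t : BTree) {k : ℕ} (hk : 1 ≤ k) (hh : t.height ≤ k) :
    2 * t.leaves ≤ 2 ^ k + 2 * t.cherriesAt k := by
  induction t generalizing k with
  | leaf =>
    have : 2 ^ 1 ≤ 2 ^ k := Nat.pow_le_pow_right (by norm_num) hk
    simp only [leaves, cherriesAt]
    omega
  | node l r ihl ihr =>
    simp only [height] at hh
    obtain ⟨j, rfl⟩ : ∃ j, k = j + 1 := ⟨k - 1, by omega⟩
    rcases Nat.eq_zero_or_pos j with rfl | hj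
    · obtain ⟨rfl, rfl⟩ : l = leaf ∧ r = leaf := by
        cases l <;> cases r <;> simp_all [height]
      decide
    · obtain ⟨i, rfl⟩ : ∃ i, j = i + 1 := ⟨j - 1, by omega⟩
      have hl := ihl (k := i + 1) (by omega) (by omega)
      have hr := ihr (k := i + 1) (by omega) (by omega)
      rw [cherriesAt_node_add_two, leaves, pow_succ]
      omega

theorem two_mul_leaves_add_two_le (t : BTree) {k : ℕ} (hh : t.height ≤ k)
    (hm : t.minDepth + 2 ≤ k) : 2 * t.leaves + 2 ≤ 2 ^ k + 2 * t.cherriesAt k := by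
  induction t generalizing k with
  | leaf =>
    have : 2 ^ 2 ≤ 2 ^ k := Nat.pow_le_pow_right (by norm_num) (by simpa [minDepth] using hm)
    simp only [leaves, cherriesAt]
    omega
  | node l r ihl ihr =>
    simp only [height, minDepth] at hh hm
    obtain ⟨i, rfl⟩ : ∃ i, k = i + 2 := ⟨k - 2, by omega⟩
    rw [cherriesAt_node_add_two, leaves, pow_succ]
    rcases le_total l.minDepth r.minDepth with hlr | hlr
    · have hl := ihl (k := i + 1) (by omega) (by omega)
      have hr := two_mul_leaves_le r (k := i + 1) (by omega) (by omega)
      omega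
    · have hl := two_mul_leaves_le l (k := i + 1) (by omega) (by omega)
      have hr := ihr (k := i + 1) (by omega) (by omega)
      omega

end BTree

/-- a tree with `n` leaves, height `k = ⌈log₂ n⌉` and exactly
`n − 2^{k−1}` cherries at depth `k` has minimal Sackin index. -/
theorem stmt15 (t : BTree)
    (hh : t.height = Nat.clog 2 t.leaves)
    (hc : cherriesAt t (Nat.clog 2 t.leaves)
            = t.leaves - 2 ^ (Nat.clog 2 t.leaves - 1)) :
    ∀ t' : BTree, t'.leaves = t.leaves → t.sackin ≤ t'.sackin := by
  intro t' ht'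
  set k := Nat.clog 2 t.leaves
  have hmin : k ≤ t.minDepth + 1 := by
    by_contra! hlt
    have hslack := two_mul_leaves_add_two_le t hh.le (by omega)
    have hlarge : 2 ^ (k - 1) < t.leaves := by
      by_contra! hle
      have := (Nat.clog_le_iff_le_pow (by norm_num)).mpr hle
      omega
    have hpow : 2 ^ k = 2 * 2 ^ (k - 1) := by
      rw [← pow_succ']
      congr 1
      omega
    omega
  have hopt := sackin_add_two_pow_eq t hh.le hmin
  have hbound := leaves_mul_le_sackin_add_two_pow t' k
  rw [ht'] at hbound
  omega
end
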